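/- Let G = (V₁ ∪ V₂ ∪ V₃ ∪ V₄, E) be a finite 4-partite undirected graph (the Vᵢ are pairwise disjoint and every edge joins vertices of two distinct parts). Define the directed graph D on vertex set V₁ ∪ V₂ ∪ V₃ ∪ V₄ ∪ {s,t} with the following arcs: both orientations between every pair of distinct vertices u,v lying in the same part Vᵢ; both orientations between u and v for every edge {u,v} ∈ E; both orientations between s and every u ∈ V₁; an arc from s to u and an arc from t to u for every u ∈ V₂; an arc from u to s and an arc from u to t for every u ∈ V₃; both orientations between t and every u ∈ V₄. Then a subset R ⊆ V₁ ∪ V₂ ∪ V₃ ∪ V₄ is a vertex cover of G if and only if in the subgraph of D induced by the vertices not in R there exist two distinct vertices u, v such that there is no directed u→v path and no directed v→u path. -/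
import Mathlib


/-- The arcs of the digraph `D` built from a 4-partite graph `G` with parts
`P 0, P 1, P 2, P 3` in the reduction from VertexCover on 4-partite graphs to
NodeBiCut. The terminals are `s = Sum.inr false` and `t = Sum.inr true`. -/
def biArc10 {V : Type*} (G : SimpleGraph V) (P : Fin 4 → Set V) :
    (V ⊕ Bool) → (V ⊕ Bool) → Prop := fun x y =>
  match x, y with
  | Sum.inl u, Sum.inl v => (u ≠ v ∧ ∃ i, u ∈ P i ∧ v ∈ P i) ∨ G.Adj u v
  | Sum.inr false, Sum.inl u => u ∈ P 0 ∨ u ∈ P 1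
  | Sum.inl u, Sum.inr false => u ∈ P 0 ∨ u ∈ P 2
  | Sum.inr true, Sum.inl u => u ∈ P 3 ∨ u ∈ P 1
  | Sum.inl u, Sum.inr true => u ∈ P 3 ∨ u ∈ P 2
  | _, _ => False

/-- `R` is a vertex cover of the 4-partite graph `G` iff in the
subgraph of `D` induced on the complement of `R`, there are two distinct vertices
with no directed path between them in either direction. -/
theorem stmt_10 {V : Type*} [Fintype V] (G : SimpleGraph V) (P : Fin 4 → Set V)
    (hdisj : ∀ i j, i ≠ j → Disjoint (P i) (P j))
    (hcover : (⋃ i, P i) = Set.univ)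
    (hpartite : ∀ x y, G.Adj x y → ¬ ∃ i, x ∈ P i ∧ y ∈ P i)
    (R : Set V) :
    (∀ x y, G.Adj x y → x ∈ R ∨ y ∈ R) ↔
      ∃ u v : V ⊕ Bool, u ∉ Sum.inl '' R ∧ v ∉ Sum.inl '' R ∧ u ≠ v ∧
        ¬ Relation.ReflTransGen
            (fun x y => biArc10 G P x y ∧ x ∉ Sum.inl '' R ∧ y ∉ Sum.inl '' R) u v ∧
        ¬ Relation.ReflTransGen
            (fun x y => biArc10 G P x y ∧ x ∉ Sum.inl '' R ∧ y ∉ Sum.inl '' R) v u := by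
  classical
  have hmem : ∀ a : V, ((Sum.inl a : V ⊕ Bool) ∈ Sum.inl '' R) ↔ a ∈ R := by
    intro a; simp
  have hmemr : ∀ b : Bool, ((Sum.inr b : V ⊕ Bool) ∉ Sum.inl '' R) := by
    intro b; simp
  have hdisj' : ∀ (i j : Fin 4) (a : V), i ≠ j → a ∈ P i → a ∈ P j → False :=
    fun i j a h hi hj => Set.disjoint_left.mp (hdisj i j h) hi hj
  have hpart : ∀ a : V, ∃ i, a ∈ P i := by
    intro a
    have : a ∈ ⋃ i, P i := hcover ▸ Set.mem_univ a
    simpa [Set.mem_iUnion] using this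
  set Step : (V ⊕ Bool) → (V ⊕ Bool) → Prop :=
    (fun x y => biArc10 G P x y ∧ x ∉ Sum.inl '' R ∧ y ∉ Sum.inl '' R) with hStepDef
  constructor
  · -- vertex cover → no path between s and t
    intro hcov
    refine ⟨Sum.inr false, Sum.inr true, hmemr false, hmemr true, by simp, ?_, ?_⟩
    · -- no s → t path
      intro h
      have inv : ∀ z : V ⊕ Bool, Relation.ReflTransGen Step (Sum.inr false) z →
          z = Sum.inr false ∨ ∃ u, z = Sum.inl u ∧ (u ∈ P 0 ∨ u ∈ P 1) := by
        intro z hz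
        induction hz with
        | refl => exact Or.inl rfl
        | @tail b c h₁ h₂ ih =>
          obtain ⟨harc, hb, hc⟩ := h₂
          rcases ih with rfl | ⟨u, rfl, hu⟩
          · rcases c with w | bb
            · exact Or.inr ⟨w, rfl, harc⟩
            · cases bb
              · exact Or.inl rfl
              · exact (harc : False).elim
          · rcases c with w | bb
            · have harc' : (u ≠ w ∧ ∃ i, u ∈ P i ∧ w ∈ P i) ∨ G.Adj u w := harc
              rcases harc' with ⟨-, i, hui, hwi⟩ | hadj
              · refine Or.inr ⟨w, rfl, ?_⟩
                rcases hu with h0 | h1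
                · have : i = 0 := by
                    by_contra hne; exact hdisj' i 0 u hne hui h0
                  subst this; exact Or.inl hwi
                · have : i = 1 := by
                    by_contra hne; exact hdisj' i 1 u hne hui h1
                  subst this; exact Or.inr hwi
              · rcases hcov u w hadj with hR | hR
                · exact absurd ((hmem u).mpr hR) hb
                · exact absurd ((hmem w).mpr hR) hc
            · cases bb
              · exact Or.inl rfl
              · have harc' : u ∈ P 3 ∨ u ∈ P 2 := harc
                rcases hu with h0 | h1 <;> rcases harc' with h' | h'
                · exact (hdisj' 3 0 u (by decide) h' h0).elim
                · exact (hdisj' 2 0 u (by decide) h' h0).elim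
                · exact (hdisj' 3 1 u (by decide) h' h1).elim
                · exact (hdisj' 2 1 u (by decide) h' h1).elim
      rcases inv _ h with h1 | ⟨u, h1, -⟩ <;> simp at h1
    · -- no t → s path
      intro h
      have inv : ∀ z : V ⊕ Bool, Relation.ReflTransGen Step (Sum.inr true) z →
          z = Sum.inr true ∨ ∃ u, z = Sum.inl u ∧ (u ∈ P 3 ∨ u ∈ P 1) := by
        intro z hz
        induction hz with
        | refl => exact Or.inl rfl
        | @tail b c h₁ h₂ ih =>
          obtain ⟨harc, hb, hc⟩ := h₂
          rcases ih with rfl | ⟨u, rfl, hu⟩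
          · rcases c with w | bb
            · exact Or.inr ⟨w, rfl, harc⟩
            · cases bb
              · exact (harc : False).elim
              · exact Or.inl rfl
          · rcases c with w | bb
            · have harc' : (u ≠ w ∧ ∃ i, u ∈ P i ∧ w ∈ P i) ∨ G.Adj u w := harc
              rcases harc' with ⟨-, i, hui, hwi⟩ | hadj
              · refine Or.inr ⟨w, rfl, ?_⟩
                rcases hu with h3 | h1
                · have : i = 3 := by
                    by_contra hne; exact hdisj' i 3 u hne hui h3
                  subst this; exact Or.inl hwi
                · have : i = 1 := by
                    by_contra hne; exact hdisj' i 1 u hne hui h1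
                  subst this; exact Or.inr hwi
              · rcases hcov u w hadj with hR | hR
                · exact absurd ((hmem u).mpr hR) hb
                · exact absurd ((hmem w).mpr hR) hc
            · cases bb
              · have harc' : u ∈ P 0 ∨ u ∈ P 2 := harc
                rcases hu with h3 | h1 <;> rcases harc' with h' | h'
                · exact (hdisj' 0 3 u (by decide) h' h3).elim
                · exact (hdisj' 2 3 u (by decide) h' h3).elim
                · exact (hdisj' 0 1 u (by decide) h' h1).elim
                · exact (hdisj' 2 1 u (by decide) h' h1).elim
              · exact Or.inl rfl
      rcases inv _ h with h1 | ⟨u, h1, -⟩ <;> simp at h1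
  · -- no path between some pair → vertex cover
    rintro ⟨u, v, hu, hv, hne, huv, hvu⟩ x y hadj
    by_contra hcon
    push_neg at hcon
    obtain ⟨hxR, hyR⟩ := hcon
    obtain ⟨i, hxi⟩ := hpart x
    obtain ⟨j, hyj⟩ := hpart y
    have hij : i ≠ j := by
      rintro rfl; exact hpartite x y hadj ⟨i, hxi, hyj⟩
    -- basic step constructors
    have stepSa : ∀ a : V, a ∉ R → (a ∈ P 0 ∨ a ∈ P 1) → Step (Sum.inr false) (Sum.inl a) :=
      fun a ha h => ⟨h, hmemr false, fun hc => ha ((hmem a).mp hc)⟩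
    have stepAs : ∀ a : V, a ∉ R → (a ∈ P 0 ∨ a ∈ P 2) → Step (Sum.inl a) (Sum.inr false) :=
      fun a ha h => ⟨h, fun hc => ha ((hmem a).mp hc), hmemr false⟩
    have stepTa : ∀ a : V, a ∉ R → (a ∈ P 3 ∨ a ∈ P 1) → Step (Sum.inr true) (Sum.inl a) :=
      fun a ha h => ⟨h, hmemr true, fun hc => ha ((hmem a).mp hc)⟩
    have stepAt : ∀ a : V, a ∉ R → (a ∈ P 3 ∨ a ∈ P 2) → Step (Sum.inl a) (Sum.inr true) :=
      fun a ha h => ⟨h, fun hc => ha ((hmem a).mp hc), hmemr true⟩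
    have stepSame : ∀ a b : V, a ∉ R → b ∉ R → a ≠ b → (∃ k, a ∈ P k ∧ b ∈ P k) →
        Step (Sum.inl a) (Sum.inl b) :=
      fun a b ha hb hne hk =>
        ⟨Or.inl ⟨hne, hk⟩, fun hc => ha ((hmem a).mp hc), fun hc => hb ((hmem b).mp hc)⟩
    have stepAdj : ∀ a b : V, a ∉ R → b ∉ R → G.Adj a b → Step (Sum.inl a) (Sum.inl b) :=
      fun a b ha hb h =>
        ⟨Or.inr h, fun hc => ha ((hmem a).mp hc), fun hc => hb ((hmem b).mp hc)⟩
    -- single-step reach lemmas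
    have Rsa : ∀ a : V, a ∉ R → (a ∈ P 0 ∨ a ∈ P 1) →
        Relation.ReflTransGen Step (Sum.inr false) (Sum.inl a) :=
      fun a ha h => Relation.ReflTransGen.single (stepSa a ha h)
    have Ras : ∀ a : V, a ∉ R → (a ∈ P 0 ∨ a ∈ P 2) →
        Relation.ReflTransGen Step (Sum.inl a) (Sum.inr false) :=
      fun a ha h => Relation.ReflTransGen.single (stepAs a ha h)
    have Rta : ∀ a : V, a ∉ R → (a ∈ P 3 ∨ a ∈ P 1) →
        Relation.ReflTransGen Step (Sum.inr true) (Sum.inl a) :=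
      fun a ha h => Relation.ReflTransGen.single (stepTa a ha h)
    have Rat : ∀ a : V, a ∉ R → (a ∈ P 3 ∨ a ∈ P 2) →
        Relation.ReflTransGen Step (Sum.inl a) (Sum.inr true) :=
      fun a ha h => Relation.ReflTransGen.single (stepAt a ha h)
    -- connectivity between s and t via the uncovered edge
    have hxyStep : Relation.ReflTransGen Step (Sum.inl x) (Sum.inl y) :=
      Relation.ReflTransGen.single (stepAdj x y hxR hyR hadj)
    have hyxStep : Relation.ReflTransGen Step (Sum.inl y) (Sum.inl x) :=
      Relation.ReflTransGen.single (stepAdj y x hyR hxR hadj.symm)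
    have hst : Relation.ReflTransGen Step (Sum.inr false) (Sum.inr true) ∨
        Relation.ReflTransGen Step (Sum.inr true) (Sum.inr false) := by
      have hfin : ∀ i j : Fin 4, i ≠ j →
          (i = 0 ∧ j = 1) ∨ (i = 0 ∧ j = 2) ∨ (i = 0 ∧ j = 3) ∨
          (i = 1 ∧ j = 0) ∨ (i = 1 ∧ j = 2) ∨ (i = 1 ∧ j = 3) ∨
          (i = 2 ∧ j = 0) ∨ (i = 2 ∧ j = 1) ∨ (i = 2 ∧ j = 3) ∨
          (i = 3 ∧ j = 0) ∨ (i = 3 ∧ j = 1) ∨ (i = 3 ∧ j = 2) := by decide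
      rcases hfin i j hij with ⟨rfl, rfl⟩ | ⟨rfl, rfl⟩ | ⟨rfl, rfl⟩ | ⟨rfl, rfl⟩ |
        ⟨rfl, rfl⟩ | ⟨rfl, rfl⟩ | ⟨rfl, rfl⟩ | ⟨rfl, rfl⟩ | ⟨rfl, rfl⟩ | ⟨rfl, rfl⟩ |
        ⟨rfl, rfl⟩ | ⟨rfl, rfl⟩
      · -- x ∈ P0, y ∈ P1 : t → y → x → s
        exact Or.inr ((Rta y hyR (Or.inr hyj)).trans (hyxStep.trans (Ras x hxR (Or.inl hxi))))
      · -- x ∈ P0, y ∈ P2 : s → x → y → t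
        exact Or.inl ((Rsa x hxR (Or.inl hxi)).trans (hxyStep.trans (Rat y hyR (Or.inr hyj))))
      · -- x ∈ P0, y ∈ P3 : s → x → y → t
        exact Or.inl ((Rsa x hxR (Or.inl hxi)).trans (hxyStep.trans (Rat y hyR (Or.inl hyj))))
      · -- x ∈ P1, y ∈ P0 : t → x → y → s
        exact Or.inr ((Rta x hxR (Or.inr hxi)).trans (hxyStep.trans (Ras y hyR (Or.inl hyj))))
      · -- x ∈ P1, y ∈ P2 : s → x → y → t
        exact Or.inl ((Rsa x hxR (Or.inr hxi)).trans (hxyStep.trans (Rat y hyR (Or.inr hyj))))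
      · -- x ∈ P1, y ∈ P3 : s → x → y → t
        exact Or.inl ((Rsa x hxR (Or.inr hxi)).trans (hxyStep.trans (Rat y hyR (Or.inl hyj))))
      · -- x ∈ P2, y ∈ P0 : s → y → x → t
        exact Or.inl ((Rsa y hyR (Or.inl hyj)).trans (hyxStep.trans (Rat x hxR (Or.inr hxi))))
      · -- x ∈ P2, y ∈ P1 : s → y → x → t
        exact Or.inl ((Rsa y hyR (Or.inr hyj)).trans (hyxStep.trans (Rat x hxR (Or.inr hxi))))
      · -- x ∈ P2, y ∈ P3 : t → y → x → s
        exact Or.inr ((Rta y hyR (Or.inl hyj)).trans (hyxStep.trans (Ras x hxR (Or.inr hxi))))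
      · -- x ∈ P3, y ∈ P0 : s → y → x → t
        exact Or.inl ((Rsa y hyR (Or.inl hyj)).trans (hyxStep.trans (Rat x hxR (Or.inl hxi))))
      · -- x ∈ P3, y ∈ P1 : s → y → x → t
        exact Or.inl ((Rsa y hyR (Or.inr hyj)).trans (hyxStep.trans (Rat x hxR (Or.inl hxi))))
      · -- x ∈ P3, y ∈ P2 : t → x → y → s
        exact Or.inr ((Rta x hxR (Or.inl hxi)).trans (hxyStep.trans (Ras y hyR (Or.inr hyj))))
    -- reach between any vertex and a terminal
    have key2 : ∀ (a : V) (bb : Bool), a ∉ R →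
        Relation.ReflTransGen Step (Sum.inl a) (Sum.inr bb) ∨
        Relation.ReflTransGen Step (Sum.inr bb) (Sum.inl a) := by
      intro a bb ha
      obtain ⟨k, hk⟩ := hpart a
      have hfin : ∀ k : Fin 4, k = 0 ∨ k = 1 ∨ k = 2 ∨ k = 3 := by decide
      cases bb
      · rcases hfin k with rfl | rfl | rfl | rfl
        · exact Or.inl (Ras a ha (Or.inl hk))
        · exact Or.inr (Rsa a ha (Or.inr hk))
        · exact Or.inl (Ras a ha (Or.inr hk))
        · rcases hst with h | h
          · exact Or.inr (h.trans (Rta a ha (Or.inl hk)))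
          · exact Or.inl ((Rat a ha (Or.inl hk)).trans h)
      · rcases hfin k with rfl | rfl | rfl | rfl
        · rcases hst with h | h
          · exact Or.inl ((Ras a ha (Or.inl hk)).trans h)
          · exact Or.inr (h.trans (Rsa a ha (Or.inl hk)))
        · exact Or.inr (Rta a ha (Or.inr hk))
        · exact Or.inl (Rat a ha (Or.inr hk))
        · exact Or.inl (Rat a ha (Or.inl hk))
    -- the master lemma: any two surviving vertices are connected in some direction
    have key : ∀ a b : V ⊕ Bool, a ∉ Sum.inl '' R → b ∉ Sum.inl '' R → a ≠ b →
        Relation.ReflTransGen Step a b ∨ Relation.ReflTransGen Step b a := by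
      rintro (a | ba) (b | bb) ha hb hneq
      · -- both original vertices
        have haR : a ∉ R := fun h => ha ((hmem a).mpr h)
        have hbR : b ∉ R := fun h => hb ((hmem b).mpr h)
        have hab : a ≠ b := fun h => hneq (by rw [h])
        obtain ⟨k, hk⟩ := hpart a
        obtain ⟨l, hl⟩ := hpart b
        by_cases hkl : k = l
        · subst hkl
          exact Or.inl (Relation.ReflTransGen.single (stepSame a b haR hbR hab ⟨k, hk, hl⟩))
        · have hfin : ∀ k l : Fin 4, k ≠ l →
              (k = 0 ∧ l = 1) ∨ (k = 0 ∧ l = 2) ∨ (k = 0 ∧ l = 3) ∨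
              (k = 1 ∧ l = 0) ∨ (k = 1 ∧ l = 2) ∨ (k = 1 ∧ l = 3) ∨
              (k = 2 ∧ l = 0) ∨ (k = 2 ∧ l = 1) ∨ (k = 2 ∧ l = 3) ∨
              (k = 3 ∧ l = 0) ∨ (k = 3 ∧ l = 1) ∨ (k = 3 ∧ l = 2) := by decide
          rcases hfin k l hkl with ⟨rfl, rfl⟩ | ⟨rfl, rfl⟩ | ⟨rfl, rfl⟩ | ⟨rfl, rfl⟩ |
            ⟨rfl, rfl⟩ | ⟨rfl, rfl⟩ | ⟨rfl, rfl⟩ | ⟨rfl, rfl⟩ | ⟨rfl, rfl⟩ | ⟨rfl, rfl⟩ |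
            ⟨rfl, rfl⟩ | ⟨rfl, rfl⟩
          · -- a ∈ P0, b ∈ P1 : a → s → b
            exact Or.inl ((Ras a haR (Or.inl hk)).trans (Rsa b hbR (Or.inr hl)))
          · -- a ∈ P0, b ∈ P2 : b → s → a
            exact Or.inr ((Ras b hbR (Or.inr hl)).trans (Rsa a haR (Or.inl hk)))
          · -- a ∈ P0, b ∈ P3 : via s-t connectivity
            rcases hst with h | h
            · exact Or.inl ((Ras a haR (Or.inl hk)).trans (h.trans (Rta b hbR (Or.inl hl))))
            · exact Or.inr ((Rat b hbR (Or.inl hl)).trans (h.trans (Rsa a haR (Or.inl hk))))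
          · -- a ∈ P1, b ∈ P0 : b → s → a
            exact Or.inr ((Ras b hbR (Or.inl hl)).trans (Rsa a haR (Or.inr hk)))
          · -- a ∈ P1, b ∈ P2 : b → s → a
            exact Or.inr ((Ras b hbR (Or.inr hl)).trans (Rsa a haR (Or.inr hk)))
          · -- a ∈ P1, b ∈ P3 : b → t → a
            exact Or.inr ((Rat b hbR (Or.inl hl)).trans (Rta a haR (Or.inr hk)))
          · -- a ∈ P2, b ∈ P0 : a → s → b
            exact Or.inl ((Ras a haR (Or.inr hk)).trans (Rsa b hbR (Or.inl hl)))
          · -- a ∈ P2, b ∈ P1 : a → s → b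
            exact Or.inl ((Ras a haR (Or.inr hk)).trans (Rsa b hbR (Or.inr hl)))
          · -- a ∈ P2, b ∈ P3 : a → t → b
            exact Or.inl ((Rat a haR (Or.inr hk)).trans (Rta b hbR (Or.inl hl)))
          · -- a ∈ P3, b ∈ P0 : via s-t connectivity
            rcases hst with h | h
            · exact Or.inr ((Ras b hbR (Or.inl hl)).trans (h.trans (Rta a haR (Or.inl hk))))
            · exact Or.inl ((Rat a haR (Or.inl hk)).trans (h.trans (Rsa b hbR (Or.inl hl))))
          · -- a ∈ P3, b ∈ P1 : a → t → b
            exact Or.inl ((Rat a haR (Or.inl hk)).trans (Rta b hbR (Or.inr hl)))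
          · -- a ∈ P3, b ∈ P2 : b → t → a
            exact Or.inr ((Rat b hbR (Or.inr hl)).trans (Rta a haR (Or.inl hk)))
      · exact key2 a bb (fun h => ha ((hmem a).mpr h))
      · exact (key2 b ba (fun h => hb ((hmem b).mpr h))).symm
      · cases ba <;> cases bb
        · exact absurd rfl hneq
        · exact hst
        · exact hst.symm
        · exact absurd rfl hneq
    rcases key u v hu hv hne with h | h
    · exact huv h
    · exact hvu h
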